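/- Let V : [0,∞) → ℝ be continuous, σ, λ, η ∈ ℝ, and let φ : [0,∞) → ℝ be a nonzero twice continuously differentiable function in L²(0,∞) satisfying −φ'' + Vφ = λφ on [0,∞) and φ'(0) = σφ(0). Set γ = −1/‖φ‖² and Φ(x) = 1 + γ∫₀ˣ φ(t)² dt, and assume Φ(x) > 0 for all x ≥ 0. Define V_λ(x) = V(x) − 2(d²/dx²) log Φ(x) and φ̃(x) = φ(x)/Φ(x). If ψ : [0,∞) → ℝ is twice continuously differentiable and satisfies −ψ'' + Vψ = ηψ on [0,∞) and ψ'(0) = σψ(0), then the function ψ_λ(x) = ψ(x) − γφ̃(x)∫₀ˣ ψ(t)φ(t) dt is twice continuously differentiable and satisfies −ψ_λ'' + V_λψ_λ = ηψ_λ on [0,∞) and the Robin boundary condition ψ_λ'(0) = σ_λψ_λ(0), where σ_λ = σ + |φ(0)|²/‖φ‖². -/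

import Mathlib

open MeasureTheory Set

/-- One-sided derivative on `[0, ∞)`. -/
noncomputable def D (f : ℝ → ℝ) : ℝ → ℝ := derivWithin f (Set.Ici 0)

/-!
Write `G x = ∫₀ˣ ψ φ`, `k = γ G / Φ` and `m = Φ' / Φ = γ φ² / Φ`, so that `ψ_λ = ψ - φ k` and
`(log Φ)'' = m'`. Since `k' = γ ψ φ / Φ - k m`, the first derivative collapses to
`ψ_λ' = ψ' - φ' k - m ψ_λ`. Differentiating once more and inserting both equations,
`-ψ_λ'' + (V - 2 m') ψ_λ - η ψ_λ` becomes `γ φ / Φ` times `φ ψ' - φ' ψ - (λ - η) G`, which vanishes: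
the Wronskian of two solutions obeying the same Robin condition at `0` has derivative
`(λ - η) ψ φ` and starts at `0`. At `x = 0`, where `G = 0` and `Φ = 1`, the formula for `ψ_λ'`
reads `ψ_λ'(0) = (σ - γ φ(0)²) ψ_λ(0)`, and `-γ φ(0)² = φ(0)² / ‖φ‖²`.
-/

theorem hasDerivWithinAt_integral_Ici {f : ℝ → ℝ} {a x : ℝ} (hf : ContinuousOn f (Ici a))
    (hx : x ∈ Ici a) :
    HasDerivWithinAt (fun u => ∫ t in a..u, f t) (f x) (Ici a) x := by
  have hint : IntervalIntegrable f volume a x :=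
    (hf.mono (by rw [uIcc_of_le hx]; exact Icc_subset_Ici_self)).intervalIntegrable
  have hmeas : AEStronglyMeasurable f (volume.restrict (Ici a)) :=
    hf.aestronglyMeasurable measurableSet_Ici
  rcases eq_or_lt_of_le (show a ≤ x from hx) with rfl | hax
  · exact intervalIntegral.integral_hasDerivWithinAt_right hint
      ⟨Ici a, Filter.mem_of_superset self_mem_nhdsWithin Ioi_subset_Ici_self, hmeas⟩
      ((hf a self_mem_Ici).mono Ioi_subset_Ici_self)
  · have hnhds : Ici a ∈ nhds x := Ici_mem_nhds hax
    exact (intervalIntegral.integral_hasDerivAt_right hint ⟨Ici a, hnhds, hmeas⟩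
      (hf.continuousAt hnhds)).hasDerivWithinAt

theorem contDiffOn_integral_Ici {f : ℝ → ℝ} {a : ℝ} {n : ℕ} (hf : ContDiffOn ℝ n f (Ici a)) :
    ContDiffOn ℝ (n + 1) (fun u => ∫ t in a..u, f t) (Ici a) := by
  have hderiv := fun x (hx : x ∈ Ici a) => hasDerivWithinAt_integral_Ici hf.continuousOn hx
  refine (contDiffOn_succ_iff_derivWithin (uniqueDiffOn_Ici a)).2
    ⟨fun x hx => (hderiv x hx).differentiableWithinAt, fun h => by simp at h, ?_⟩
  exact hf.congr fun x hx => (hderiv x hx).derivWithin (uniqueDiffOn_Ici a x hx)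

theorem hasDerivWithinAt_D {f : ℝ → ℝ} {n : WithTop ℕ∞} (hf : ContDiffOn ℝ n f (Ici 0))
    (hn : n ≠ 0) {x : ℝ} (hx : x ∈ Ici 0) : HasDerivWithinAt f (D f x) (Ici 0) x :=
  (hf.differentiableOn hn x hx).hasDerivWithinAt

theorem hasDerivWithinAt_D_D {f : ℝ → ℝ} (hf : ContDiffOn ℝ 2 f (Ici 0)) {x : ℝ}
    (hx : x ∈ Ici 0) : HasDerivWithinAt (D f) (D (D f) x) (Ici 0) x :=
  hasDerivWithinAt_D (hf.derivWithin (uniqueDiffOn_Ici 0) (m := 1) (by norm_num)) one_ne_zero hx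

theorem D_eq {f : ℝ → ℝ} {f' x : ℝ} (hf : HasDerivWithinAt f f' (Ici 0) x) (hx : x ∈ Ici 0) :
    D f x = f' :=
  hf.derivWithin (uniqueDiffOn_Ici 0 x hx)

theorem D_D_eq {f f' : ℝ → ℝ} {f'' x : ℝ}
    (hf : ∀ y ∈ Ici (0:ℝ), HasDerivWithinAt f (f' y) (Ici 0) y)
    (hf' : HasDerivWithinAt f' f'' (Ici 0) x) (hx : x ∈ Ici 0) : D (D f) x = f'' := by
  rw [← D_eq hf' hx]
  exact derivWithin_congr (fun y hy => D_eq (hf y hy) hy) (D_eq (hf x hx) hx)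

theorem wronskian_eq_integral {V φ ψ : ℝ → ℝ} {lam η : ℝ}
    (hφ : ContDiffOn ℝ 2 φ (Ici 0)) (hψ : ContDiffOn ℝ 2 ψ (Ici 0))
    (hφode : ∀ x ∈ Ici (0:ℝ), -(D (D φ) x) + V x * φ x = lam * φ x)
    (hψode : ∀ x ∈ Ici (0:ℝ), -(D (D ψ) x) + V x * ψ x = η * ψ x)
    {x : ℝ} (hx : x ∈ Ici 0) :
    φ x * D ψ x - D φ x * ψ x =
      φ 0 * D ψ 0 - D φ 0 * ψ 0 + (lam - η) * ∫ t in (0:ℝ)..x, ψ t * φ t := by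
  set W : ℝ → ℝ := fun y =>
    φ y * D ψ y - D φ y * ψ y - (lam - η) * ∫ t in (0:ℝ)..y, ψ t * φ t
  have hW' : ∀ y ∈ Ici (0:ℝ), HasDerivWithinAt W 0 (Ici 0) y := fun y hy =>
    ((((hasDerivWithinAt_D hφ two_ne_zero hy).mul
      (hasDerivWithinAt_D_D hψ hy)).sub
      ((hasDerivWithinAt_D_D hφ hy).mul
      (hasDerivWithinAt_D hψ two_ne_zero hy))).sub
      ((hasDerivWithinAt_integral_Ici (hψ.continuousOn.mul hφ.continuousOn) hy).const_mul
        (lam - η))).congr_deriv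
      (by simp only [Pi.mul_apply]; linear_combination ψ y * hφode y hy - φ y * hψode y hy)
  have hconst := (convex_Ici (0:ℝ)).is_const_of_fderivWithin_eq_zero
    (fun y hy => (hW' y hy).differentiableWithinAt)
    (fun y hy => by
      rw [(hW' y hy).hasFDerivWithinAt.fderivWithin (uniqueDiffOn_Ici 0 y hy)]
      exact ContinuousLinearMap.ext fun z => by simp) hx self_mem_Ici
  simp only [W, intervalIntegral.integral_same, mul_zero, sub_zero] at hconst
  linarith

section Transform

variable {φ ψ Φ G : ℝ → ℝ} {γ : ℝ}

theorem hasDerivWithinAt_mul_sq_div {s : Set ℝ} {x φ' : ℝ} (hφ : HasDerivWithinAt φ φ' s x)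
    (hΦ : HasDerivWithinAt Φ (γ * φ x ^ 2) s x) (hΦx : Φ x ≠ 0) :
    HasDerivWithinAt (fun y => γ * φ y ^ 2 / Φ y)
      (2 * γ * φ x * φ' / Φ x - (γ * φ x ^ 2 / Φ x) ^ 2) s x :=
  (((hφ.pow 2).const_mul γ).div hΦ hΦx).congr_deriv (by simp only [Pi.pow_apply]; field_simp; ring)

theorem hasDerivWithinAt_mul_div {s : Set ℝ} {x g : ℝ} (hG : HasDerivWithinAt G g s x)
    (hΦ : HasDerivWithinAt Φ (γ * φ x ^ 2) s x) (hΦx : Φ x ≠ 0) :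
    HasDerivWithinAt (fun y => γ * G y / Φ y)
      (γ * g / Φ x - γ * G x / Φ x * (γ * φ x ^ 2 / Φ x)) s x :=
  ((hG.const_mul γ).div hΦ hΦx).congr_deriv (by field_simp)

theorem hasDerivWithinAt_transform {s : Set ℝ} {x φ' ψ' : ℝ} (hφ : HasDerivWithinAt φ φ' s x)
    (hψ : HasDerivWithinAt ψ ψ' s x) (hG : HasDerivWithinAt G (ψ x * φ x) s x)
    (hΦ : HasDerivWithinAt Φ (γ * φ x ^ 2) s x) (hΦx : Φ x ≠ 0) :
    HasDerivWithinAt (fun y => ψ y - φ y * (γ * G y / Φ y))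
      (ψ' - φ' * (γ * G x / Φ x) - γ * φ x ^ 2 / Φ x * (ψ x - φ x * (γ * G x / Φ x))) s x :=
  (hψ.sub (hφ.mul (hasDerivWithinAt_mul_div hG hΦ hΦx))).congr_deriv (by ring)

theorem transform_ode {V : ℝ → ℝ} {lam η : ℝ}
    (hφ : ContDiffOn ℝ 2 φ (Ici 0)) (hψ : ContDiffOn ℝ 2 ψ (Ici 0))
    (hφode : ∀ x ∈ Ici (0:ℝ), -(D (D φ) x) + V x * φ x = lam * φ x)
    (hψode : ∀ x ∈ Ici (0:ℝ), -(D (D ψ) x) + V x * ψ x = η * ψ x)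
    (hG : ∀ x ∈ Ici (0:ℝ), HasDerivWithinAt G (ψ x * φ x) (Ici 0) x)
    (hΦ : ∀ x ∈ Ici (0:ℝ), HasDerivWithinAt Φ (γ * φ x ^ 2) (Ici 0) x)
    (hΦne : ∀ x ∈ Ici (0:ℝ), Φ x ≠ 0)
    (hW : ∀ x ∈ Ici (0:ℝ), φ x * D ψ x - D φ x * ψ x = (lam - η) * G x)
    {x : ℝ} (hx : x ∈ Ici 0) :
    -(D (D fun y => ψ y - φ y * (γ * G y / Φ y)) x)
        + (V x - 2 * D (D fun y => Real.log (Φ y)) x) * (ψ x - φ x * (γ * G x / Φ x))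
      = η * (ψ x - φ x * (γ * G x / Φ x)) := by
  set m : ℝ → ℝ := fun y => γ * φ y ^ 2 / Φ y
  set k : ℝ → ℝ := fun y => γ * G y / Φ y
  set ψlam : ℝ → ℝ := fun y => ψ y - φ y * k y
  have hφ' := fun y (hy : y ∈ Ici (0:ℝ)) => hasDerivWithinAt_D hφ two_ne_zero hy
  have hψ' := fun y (hy : y ∈ Ici (0:ℝ)) => hasDerivWithinAt_D hψ two_ne_zero hy
  have hψlam' : ∀ y ∈ Ici (0:ℝ),
      HasDerivWithinAt ψlam (D ψ y - D φ y * k y - m y * ψlam y) (Ici 0) y := fun y hy =>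
    hasDerivWithinAt_transform (hφ' y hy) (hψ' y hy) (hG y hy) (hΦ y hy) (hΦne y hy)
  have hm' := hasDerivWithinAt_mul_sq_div (hφ' x hx) (hΦ x hx) (hΦne x hx)
  have hψlam'' := ((hasDerivWithinAt_D_D hψ hx).sub
    ((hasDerivWithinAt_D_D hφ hx).mul
      (hasDerivWithinAt_mul_div (hG x hx) (hΦ x hx) (hΦne x hx)))).sub
    (hm'.mul (hψlam' x hx))
  have hlog' : ∀ y ∈ Ici (0:ℝ), HasDerivWithinAt (fun y => Real.log (Φ y)) (m y) (Ici 0) y :=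
    fun y hy => (hΦ y hy).log (hΦne y hy)
  rw [D_D_eq hψlam' hψlam'' hx, D_D_eq hlog' hm' hx]
  linear_combination (norm := skip) hψode x hx - k x * hφode x hx + γ * φ x / Φ x * hW x hx
  have hΦx := hΦne x hx
  simp only [m, k, ψlam]
  field_simp
  ring

theorem D_transform_zero {σ φ' : ℝ} (hφ : HasDerivWithinAt φ φ' (Ici 0) 0)
    (hψ : HasDerivWithinAt ψ (σ * ψ 0) (Ici 0) 0) (hG : HasDerivWithinAt G (ψ 0 * φ 0) (Ici 0) 0)
    (hΦ : HasDerivWithinAt Φ (γ * φ 0 ^ 2) (Ici 0) 0) (hG0 : G 0 = 0) (hΦ0 : Φ 0 = 1) :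
    D (fun y => ψ y - φ y * (γ * G y / Φ y)) 0
      = (σ - γ * φ 0 ^ 2) * (ψ 0 - φ 0 * (γ * G 0 / Φ 0)) := by
  rw [D_eq (hasDerivWithinAt_transform hφ hψ hG hΦ (by simp [hΦ0])) self_mem_Ici, hG0, hΦ0]
  ring

end Transform

theorem contDiffOn_transform {φ ψ Φ : ℝ → ℝ} {γ : ℝ}
    (hφ : ContDiffOn ℝ 2 φ (Ici 0)) (hψ : ContDiffOn ℝ 2 ψ (Ici 0))
    (hΦ : ∀ x, Φ x = 1 + γ * ∫ t in (0:ℝ)..x, φ t ^ 2) (hΦne : ∀ x ∈ Ici (0:ℝ), Φ x ≠ 0) :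
    ContDiffOn ℝ 2 (fun y => ψ y - φ y * (γ * (∫ t in (0:ℝ)..y, ψ t * φ t) / Φ y)) (Ici 0) := by
  have hprim : ∀ {f : ℝ → ℝ}, ContDiffOn ℝ 2 f (Ici 0) →
      ContDiffOn ℝ 2 (fun x => ∫ t in (0:ℝ)..x, f t) (Ici 0) := fun hf =>
    contDiffOn_integral_Ici (n := 1) (hf.of_le (by norm_num))
  have hΦC : ContDiffOn ℝ 2 Φ (Ici 0) :=
    (contDiffOn_const.add (contDiffOn_const.mul (hprim (hφ.pow 2)))).congr fun y _ => hΦ y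
  exact hψ.sub (hφ.mul ((contDiffOn_const.mul (hprim (hψ.mul hφ))).div hΦC hΦne))

theorem double_commutation_general
    (V φ ψ : ℝ → ℝ) (σ lam η : ℝ)
    (hφ : ContDiffOn ℝ 2 φ (Set.Ici 0))
    (hφode : ∀ x ∈ Set.Ici (0:ℝ), -(D (D φ) x) + V x * φ x = lam * φ x)
    (hφbc : D φ 0 = σ * φ 0)
    (γ : ℝ) (hγ : γ = -1 / (∫ x in Set.Ioi (0:ℝ), (φ x) ^ 2))
    (Φ : ℝ → ℝ) (hΦ : ∀ x, Φ x = 1 + γ * ∫ t in (0:ℝ)..x, (φ t) ^ 2)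
    (hΦpos : ∀ x ∈ Set.Ici (0:ℝ), 0 < Φ x)
    (Vlam : ℝ → ℝ) (hVlam : ∀ x ∈ Set.Ici (0:ℝ),
      Vlam x = V x - 2 * D (D (fun y => Real.log (Φ y))) x)
    (φt : ℝ → ℝ) (hφt : ∀ x, φt x = φ x / Φ x)
    (hψ : ContDiffOn ℝ 2 ψ (Set.Ici 0))
    (hψode : ∀ x ∈ Set.Ici (0:ℝ), -(D (D ψ) x) + V x * ψ x = η * ψ x)
    (hψbc : D ψ 0 = σ * ψ 0)
    (ψlam : ℝ → ℝ) (hψlam : ∀ x,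
      ψlam x = ψ x - γ * φt x * ∫ t in (0:ℝ)..x, ψ t * φ t)
    (σlam : ℝ) (hσlam : σlam = σ + (φ 0) ^ 2 / (∫ x in Set.Ioi (0:ℝ), (φ x) ^ 2)) :
    ContDiffOn ℝ 2 ψlam (Set.Ici 0) ∧
      (∀ x ∈ Set.Ici (0:ℝ), -(D (D ψlam) x) + Vlam x * ψlam x = η * ψlam x) ∧
      D ψlam 0 = σlam * ψlam 0 := by
  set G : ℝ → ℝ := fun x => ∫ t in (0:ℝ)..x, ψ t * φ t
  have hG : ∀ x ∈ Ici (0:ℝ), HasDerivWithinAt G (ψ x * φ x) (Ici 0) x := fun x hx =>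
    hasDerivWithinAt_integral_Ici (hψ.continuousOn.mul hφ.continuousOn) hx
  have hΦ' : ∀ x ∈ Ici (0:ℝ), HasDerivWithinAt Φ (γ * φ x ^ 2) (Ici 0) x := fun x hx =>
    (((hasDerivWithinAt_integral_Ici (hφ.continuousOn.pow 2) hx).const_mul γ).const_add 1).congr
      (fun y _ => hΦ y) (hΦ x)
  have hΦne : ∀ x ∈ Ici (0:ℝ), Φ x ≠ 0 := fun x hx => (hΦpos x hx).ne'
  have hW : ∀ x ∈ Ici (0:ℝ), φ x * D ψ x - D φ x * ψ x = (lam - η) * G x := fun x hx => by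
    rw [wronskian_eq_integral hφ hψ hφode hψode hx, hφbc, hψbc]
    ring
  have hψlam' : ψlam = fun y => ψ y - φ y * (γ * G y / Φ y) :=
    funext fun y => by rw [hψlam, hφt]; ring
  have hσlam' : σlam = σ - γ * φ 0 ^ 2 := by rw [hσlam, hγ]; ring
  subst hψlam' hσlam'
  refine ⟨contDiffOn_transform hφ hψ hΦ hΦne, fun x hx => ?_, ?_⟩
  · rw [hVlam x hx]
    exact transform_ode hφ hψ hφode hψode hG hΦ' hΦne hW hx
  · exact D_transform_zero (hasDerivWithinAt_D hφ two_ne_zero self_mem_Ici)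
      (hψbc ▸ hasDerivWithinAt_D hψ two_ne_zero self_mem_Ici) (hG 0 self_mem_Ici)
      (hΦ' 0 self_mem_Ici) intervalIntegral.integral_same (by simp [hΦ])

/-- **Double commutation method** (eigenfunction mapping, Gesztesy–Teschl): removing
the eigenvalue `λ` of `-d²/dx² + V` with eigenfunction `φ` turns the Robin boundary
condition with parameter `σ` into the Robin boundary condition with parameter
`σ_λ = σ + |φ(0)|²/‖φ‖²`. -/
theorem double_commutation
    (V φ ψ : ℝ → ℝ) (σ lam η : ℝ)
    (hV : ContinuousOn V (Set.Ici 0))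
    (hφ : ContDiffOn ℝ 2 φ (Set.Ici 0))
    (hφne : ¬ ∀ᵐ x ∂(volume.restrict (Set.Ioi (0:ℝ))), φ x = 0)
    (hφL2 : MemLp φ 2 (volume.restrict (Set.Ioi (0:ℝ))))
    (hφode : ∀ x ∈ Set.Ici (0:ℝ), -(D (D φ) x) + V x * φ x = lam * φ x)
    (hφbc : D φ 0 = σ * φ 0)
    (γ : ℝ) (hγ : γ = -1 / (∫ x in Set.Ioi (0:ℝ), (φ x) ^ 2))
    (Φ : ℝ → ℝ) (hΦ : ∀ x, Φ x = 1 + γ * ∫ t in (0:ℝ)..x, (φ t) ^ 2)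
    (hΦpos : ∀ x ∈ Set.Ici (0:ℝ), 0 < Φ x)
    (Vlam : ℝ → ℝ) (hVlam : ∀ x ∈ Set.Ici (0:ℝ),
      Vlam x = V x - 2 * D (D (fun y => Real.log (Φ y))) x)
    (φt : ℝ → ℝ) (hφt : ∀ x, φt x = φ x / Φ x)
    (hψ : ContDiffOn ℝ 2 ψ (Set.Ici 0))
    (hψode : ∀ x ∈ Set.Ici (0:ℝ), -(D (D ψ) x) + V x * ψ x = η * ψ x)
    (hψbc : D ψ 0 = σ * ψ 0)
    (ψlam : ℝ → ℝ) (hψlam : ∀ x,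
      ψlam x = ψ x - γ * φt x * ∫ t in (0:ℝ)..x, ψ t * φ t)
    (σlam : ℝ) (hσlam : σlam = σ + (φ 0) ^ 2 / (∫ x in Set.Ioi (0:ℝ), (φ x) ^ 2)) :
    ContDiffOn ℝ 2 ψlam (Set.Ici 0) ∧
      (∀ x ∈ Set.Ici (0:ℝ), -(D (D ψlam) x) + Vlam x * ψlam x = η * ψlam x) ∧
      D ψlam 0 = σlam * ψlam 0 :=
  double_commutation_general V φ ψ σ lam η hφ hφode hφbc γ hγ Φ hΦ hΦpos Vlam hVlam φt hφt hψ hψode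
    hψbc ψlam hψlam σlam hσlam
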